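/- arXiv:1801.08303 — 2 statements merged into one kernel-verified Lean document; each statement's English description precedes it below -/
import Mathlib

section
/- Let E be a real inner product space of dimension n ≥ 4 and let R be an algebraic curvature tensor on E with nonnegative isotropic curvature. Then for every orthonormal 4-tuple (e₁,e₂,e₃,e₄) in E one has Ric(e₁,e₁) + Ric(e₂,e₂) + Ric(e₃,e₃) + Ric(e₄,e₄) ≥ 0, where Ric denotes the Ricci curvature of R. -/
/-!
Write `K x y = R x y x y`. Adding the NNIC inequalities for `(e₁,e₂,e₃,e₄)` and `(e₂,e₁,e₃,e₄)`
cancels the term `R(e₁,e₂,e₃,e₄)`, so the cross sum `K₁₃ + K₁₄ + K₂₃ + K₂₄` is nonnegative for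
every orthonormal 4-frame. Extend `e` to an orthonormal basis `e ∪ (u_j)`; since the Ricci trace
does not depend on the basis, the quantity to bound is `A + ∑_j T_j` with `A = ∑_{a,b} K(e_a, e_b)`
and `T_j = ∑_a K(e_a, u_j)`. Cross sums of suitable frames show `A ≥ 0`, `A + T_j ≥ 0` and
`T_j + T_k ≥ 0` for `j ≠ k`; then at most one `T_j` is negative, and it is compensated either by
`A` or by any other `T_k`.
-/

open scoped RealInnerProductSpace

theorem add_sum_nonneg_of_pairwise_add_nonneg {ι M : Type*} [AddCommGroup M] [LinearOrder M]
    [IsOrderedAddMonoid M] (s : Finset ι) (c : M) (T : ι → M) (hc : 0 ≤ c)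
    (hcT : ∀ i ∈ s, 0 ≤ c + T i) (hT : ∀ i ∈ s, ∀ j ∈ s, i ≠ j → 0 ≤ T i + T j) :
    0 ≤ c + ∑ i ∈ s, T i := by
  classical
  by_cases hneg : ∃ i ∈ s, T i < 0
  · obtain ⟨i, hi, hTi⟩ := hneg
    have hpos : ∀ j ∈ s.erase i, 0 ≤ T j := fun j hj =>
      (hT i hi j (Finset.mem_of_mem_erase hj) (Finset.ne_of_mem_erase hj).symm).trans
        (add_le_of_nonpos_left hTi.le)
    rw [← Finset.add_sum_erase s T hi]
    rcases (s.erase i).eq_empty_or_nonempty with he | ⟨j, hj⟩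
    · simpa [he] using hcT i hi
    · rw [← Finset.add_sum_erase _ T hj, ← add_assoc (T i)]
      have hij := hT i hi j (Finset.mem_of_mem_erase hj) (Finset.ne_of_mem_erase hj).symm
      have hrest : 0 ≤ ∑ k ∈ (s.erase i).erase j, T k :=
        Finset.sum_nonneg fun k hk => hpos k (Finset.mem_of_mem_erase hk)
      exact add_nonneg hc (add_nonneg hij hrest)
  · push Not at hneg
    exact add_nonneg hc (Finset.sum_nonneg hneg)

section Frame

variable {α : Type*} {K : α → α → ℝ} (hsymm : ∀ x y, K x y = K y x)
  (hcross : ∀ w x y z, w ≠ x → w ≠ y → w ≠ z → x ≠ y → x ≠ z → y ≠ z →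
    0 ≤ K w y + K w z + K x y + K x z)
  {a : Fin 4 → α} (ha : Function.Injective a)
include hsymm hcross ha

theorem sum_sum_frame_nonneg (hdiag : ∀ x, K x x = 0) : 0 ≤ ∑ j, ∑ i, K (a i) (a j) := by
  have q₁ := hcross (a 0) (a 1) (a 2) (a 3)
  have q₂ := hcross (a 0) (a 2) (a 1) (a 3)
  have q₃ := hcross (a 0) (a 3) (a 1) (a 2)
  simp only [ne_eq, ha.eq_iff, Fin.reduceEq, not_false_eq_true, forall_const] at q₁ q₂ q₃
  simp only [Fin.sum_univ_four, hdiag]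
  linarith [hsymm (a 0) (a 1), hsymm (a 0) (a 2), hsymm (a 0) (a 3), hsymm (a 1) (a 2),
    hsymm (a 1) (a 3), hsymm (a 2) (a 3)]

theorem sum_sum_frame_add_sum_nonneg (hdiag : ∀ x, K x x = 0) {u : α} (hu : ∀ i, u ≠ a i) :
    0 ≤ ∑ j, ∑ i, K (a i) (a j) + ∑ i, K (a i) u := by
  -- The left side is `(r₀ + r₁ + r₂ + r₃ + q₁ + q₃) / 2 + q₂`.
  have q₁ := hcross (a 0) (a 1) (a 2) (a 3)
  have q₂ := hcross (a 0) (a 2) (a 1) (a 3)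
  have q₃ := hcross (a 0) (a 3) (a 1) (a 2)
  have r₀ := hcross u (a 0) (a 2) (a 3)
  have r₁ := hcross u (a 1) (a 3) (a 0)
  have r₂ := hcross u (a 2) (a 0) (a 1)
  have r₃ := hcross u (a 3) (a 1) (a 2)
  simp only [ne_eq, ha.eq_iff, hu, Fin.reduceEq, not_false_eq_true, forall_const]
    at q₁ q₂ q₃ r₀ r₁ r₂ r₃
  simp only [Fin.sum_univ_four, hdiag]
  linarith [hsymm (a 0) (a 1), hsymm (a 0) (a 2), hsymm (a 0) (a 3), hsymm (a 1) (a 2),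
    hsymm (a 1) (a 3), hsymm (a 2) (a 3), hsymm u (a 0), hsymm u (a 1), hsymm u (a 2),
    hsymm u (a 3)]

theorem sum_add_sum_nonneg_of_ne_frame {u v : α} (hu : ∀ i, u ≠ a i) (hv : ∀ i, v ≠ a i)
    (huv : u ≠ v) : 0 ≤ ∑ i, K (a i) u + ∑ i, K (a i) v := by
  have q₁ := hcross u v (a 0) (a 1)
  have q₂ := hcross u v (a 2) (a 3)
  simp only [ne_eq, ha.eq_iff, hu, hv, huv, Fin.reduceEq, not_false_eq_true, forall_const]
    at q₁ q₂
  simp only [Fin.sum_univ_four]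
  linarith [hsymm u (a 0), hsymm u (a 1), hsymm u (a 2), hsymm u (a 3), hsymm v (a 0),
    hsymm v (a 1), hsymm v (a 2), hsymm v (a 3)]

theorem sum_sum_nonneg_of_cross_nonneg [Fintype α] (hdiag : ∀ x, K x x = 0) :
    0 ≤ ∑ i, ∑ u, K (a i) u := by
  classical
  have hcompl : ∀ u ∈ (Finset.univ.image a)ᶜ, ∀ i, u ≠ a i := by
    simp +contextual [eq_comm]
  rw [Finset.sum_comm, ← Finset.sum_add_sum_compl (Finset.univ.image a),
    Finset.sum_image ha.injOn]
  exact add_sum_nonneg_of_pairwise_add_nonneg _ _ _ (sum_sum_frame_nonneg hsymm hcross ha hdiag)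
    (fun u hu => sum_sum_frame_add_sum_nonneg hsymm hcross ha hdiag (hcompl u hu))
    (fun u hu v hv huv =>
      sum_add_sum_nonneg_of_ne_frame hsymm hcross ha (hcompl u hu) (hcompl v hv) huv)

end Frame

section InnerProductSpace

variable {E : Type*} [NormedAddCommGroup E] [InnerProductSpace ℝ E]

theorem OrthonormalBasis.apply_eq_inner_sum_smulRight {ι : Type*} [Fintype ι]
    (b : OrthonormalBasis ι ℝ E) (B : E →ₗ[ℝ] E →ₗ[ℝ] ℝ) (x y : E) :
    B x y = ⟪x, (∑ i, (B (b i)).smulRight (b i)) y⟫ := by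
  conv_lhs => rw [← b.sum_repr' x]
  simp [inner_sum, inner_smul_right, real_inner_comm, mul_comm]

theorem OrthonormalBasis.sum_apply_self_eq {ι κ : Type*} [Fintype ι] [Fintype κ]
    (B : E →ₗ[ℝ] E →ₗ[ℝ] ℝ) (b : OrthonormalBasis ι ℝ E) (f : OrthonormalBasis κ ℝ E) :
    ∑ j, B (f j) (f j) = ∑ i, B (b i) (b i) := by
  simp only [b.apply_eq_inner_sum_smulRight B, ← LinearMap.trace_eq_sum_inner]

theorem cross_sectional_sum_nonneg (R : E →ₗ[ℝ] E →ₗ[ℝ] E →ₗ[ℝ] E →ₗ[ℝ] ℝ)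
    (hanti₁ : ∀ x y z w, R x y z w = - R y x z w)
    (hNNIC : ∀ e : Fin 4 → E, Orthonormal ℝ e →
      R (e 0) (e 2) (e 0) (e 2) + R (e 0) (e 3) (e 0) (e 3) +
        R (e 1) (e 2) (e 1) (e 2) + R (e 1) (e 3) (e 1) (e 3) -
        2 * R (e 0) (e 1) (e 2) (e 3) ≥ 0)
    {ι : Type*} {f : ι → E} (hf : Orthonormal ℝ f) {w x y z : ι} (hwx : w ≠ x) (hwy : w ≠ y)
    (hwz : w ≠ z) (hxy : x ≠ y) (hxz : x ≠ z) (hyz : y ≠ z) :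
    0 ≤ R (f w) (f y) (f w) (f y) + R (f w) (f z) (f w) (f z) +
      R (f x) (f y) (f x) (f y) + R (f x) (f z) (f x) (f z) := by
  have hv : Orthonormal ℝ (f ∘ ![w, x, y, z]) := by
    refine hf.comp _ fun i j => ?_
    fin_cases i <;> fin_cases j <;> simp [*, eq_comm]
  have h := hNNIC _ hv
  have h' := hNNIC _ (hv.comp (Equiv.swap 0 1) (Equiv.injective _))
  simp [Equiv.swap_apply_of_ne_of_ne] at h h'
  linarith [hanti₁ (f x) (f w) (f y) (f z)]

end InnerProductSpace

theorem stmt2_general {E : Type*} [NormedAddCommGroup E] [InnerProductSpace ℝ E]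
    [FiniteDimensional ℝ E] {n : ℕ}
    (R : E →ₗ[ℝ] E →ₗ[ℝ] E →ₗ[ℝ] E →ₗ[ℝ] ℝ)
    (hanti₁ : ∀ x y z w, R x y z w = - R y x z w)
    (hanti₂ : ∀ x y z w, R x y z w = - R x y w z)
    (hNNIC : ∀ e : Fin 4 → E, Orthonormal ℝ e →
      R (e 0) (e 2) (e 0) (e 2) + R (e 0) (e 3) (e 0) (e 3) +
        R (e 1) (e 2) (e 1) (e 2) + R (e 1) (e 3) (e 1) (e 3) -
        2 * R (e 0) (e 1) (e 2) (e 3) ≥ 0)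
    (b : OrthonormalBasis (Fin n) ℝ E)
    (Ric : E → E → ℝ)
    (hRic : ∀ x y, Ric x y = ∑ i, R x (b i) y (b i)) :
    ∀ e : Fin 4 → E, Orthonormal ℝ e →
      Ric (e 0) (e 0) + Ric (e 1) (e 1) + Ric (e 2) (e 2) + Ric (e 3) (e 3) ≥ 0 := by
  intro e he
  obtain ⟨s, f, hs, hf⟩ := he.toSubtypeRange.exists_orthonormalBasis_extension
  have hRic_f (x : E) : Ric x x = ∑ j, R x (f j) x (f j) := by
    rw [hRic]
    exact f.sum_apply_self_eq ((R x).flip x) b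
  let a (i : Fin 4) : s := ⟨e i, hs (Set.mem_range_self i)⟩
  have hfa (i : Fin 4) : f (a i) = e i := by rw [hf]
  have ha : Function.Injective a := fun i j hij =>
    he.linearIndependent.injective (congrArg Subtype.val hij)
  have hsymm (p q : s) : R (f p) (f q) (f p) (f q) = R (f q) (f p) (f q) (f p) := by
    rw [hanti₁, hanti₂, neg_neg]
  have hdiag (p : s) : R (f p) (f p) (f p) (f p) = 0 := by
    linarith [hanti₁ (f p) (f p) (f p) (f p)]
  have := sum_sum_nonneg_of_cross_nonneg hsymm
    (fun _ _ _ _ => cross_sectional_sum_nonneg R hanti₁ hNNIC f.orthonormal) ha hdiag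
  simpa [Fin.sum_univ_four, hRic_f, hfa] using this

/-- If an algebraic curvature tensor `R` on a real inner product space of
dimension `n ≥ 4` has nonnegative isotropic curvature, then for every orthonormal 4-tuple
`(e₁,e₂,e₃,e₄)` one has `Ric(e₁,e₁) + Ric(e₂,e₂) + Ric(e₃,e₃) + Ric(e₄,e₄) ≥ 0`, where
`Ric(x,y) = ∑ i, R(x, bᵢ, y, bᵢ)` for an orthonormal basis `(bᵢ)`. -/
theorem stmt2 {E : Type*} [NormedAddCommGroup E] [InnerProductSpace ℝ E]
    [FiniteDimensional ℝ E] {n : ℕ} (hn : Module.finrank ℝ E = n) (hdim : 4 ≤ n)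
    (R : E →ₗ[ℝ] E →ₗ[ℝ] E →ₗ[ℝ] E →ₗ[ℝ] ℝ)
    (hanti₁ : ∀ x y z w, R x y z w = - R y x z w)
    (hanti₂ : ∀ x y z w, R x y z w = - R x y w z)
    (hpair : ∀ x y z w, R x y z w = R z w x y)
    (hbianchi : ∀ x y z w, R x y z w + R y z x w + R z x y w = 0)
    (hNNIC : ∀ e : Fin 4 → E, Orthonormal ℝ e →
      R (e 0) (e 2) (e 0) (e 2) + R (e 0) (e 3) (e 0) (e 3) +
        R (e 1) (e 2) (e 1) (e 2) + R (e 1) (e 3) (e 1) (e 3) -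
        2 * R (e 0) (e 1) (e 2) (e 3) ≥ 0)
    (b : OrthonormalBasis (Fin n) ℝ E)
    (Ric : E → E → ℝ)
    (hRic : ∀ x y, Ric x y = ∑ i, R x (b i) y (b i)) :
    ∀ e : Fin 4 → E, Orthonormal ℝ e →
      Ric (e 0) (e 0) + Ric (e 1) (e 1) + Ric (e 2) (e 2) + Ric (e 3) (e 3) ≥ 0 :=
  stmt2_general R hanti₁ hanti₂ hNNIC b Ric hRic
end

section
/- Let E be a real inner product space of dimension n ≥ 4 and let A be a 4-nonnegative symmetric (self-adjoint) endomorphism of E, i.e. the sum of the four smallest eigenvalues of A is nonnegative. Then the tensor A∧id has nonnegative isotropic curvature: for every orthonormal 4-tuple (e₁,e₂,e₃,e₄) in E, (A∧id)(e₁,e₃,e₁,e₃) + (A∧id)(e₁,e₄,e₁,e₄) + (A∧id)(e₂,e₃,e₂,e₃) + (A∧id)(e₂,e₄,e₂,e₄) − 2(A∧id)(e₁,e₂,e₃,e₄) ≥ 0. -/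
/-!
On an orthonormal 4-frame `e` the isotropic curvature of `A ∧ id` collapses to the trace
`∑ ⟪A eᵢ, eᵢ⟫` of `A` on the frame. In an orthonormal eigenbasis `(vⱼ)` this trace is `∑ⱼ λⱼ tⱼ`
with weights `tⱼ = ∑ᵢ ⟪vⱼ, eᵢ⟫²`, which lie in `[0, 1]` (Bessel) and sum to 4 (Parseval). Such a
weighted sum dominates the sum of the eigenvalues over a 4-set `s` of smallest ones: if `m`
separates `λ` on `s` from `λ` off `s`, every term of `∑ⱼ (λⱼ - m) (tⱼ - 1_s(j))` is nonnegative,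
and this sum is `∑ⱼ λⱼ tⱼ - ∑_{j ∈ s} λⱼ`.
-/

open scoped RealInnerProductSpace

/-- The tensor `A ∧ id` associated to a bilinear form `A` on a real inner product space:
`(A∧id)(x,y,z,w) = ½(A(x,z)⟨y,w⟩ + ⟨x,z⟩A(y,w) − A(x,w)⟨y,z⟩ − ⟨x,w⟩A(y,z))`. -/
noncomputable def wedgeId {E : Type*} [NormedAddCommGroup E] [InnerProductSpace ℝ E]
    (A : E → E → ℝ) (x y z w : E) : ℝ :=
  (A x z * ⟪y, w⟫ + ⟪x, z⟫ * A y w - A x w * ⟪y, z⟫ - ⟪x, w⟫ * A y z) / 2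

open Finset

section WeightedSums

variable {ι : Type*} [Fintype ι] (μ : ι → ℝ)

theorem exists_card_eq_forall_le_of_mem_of_notMem {k : ℕ} (hk : k ≤ Fintype.card ι) :
    ∃ s : Finset ι, #s = k ∧ ∀ i ∈ s, ∀ j ∉ s, μ i ≤ μ j := by
  classical
  have hne : (univ.powersetCard k : Finset (Finset ι)).Nonempty :=
    powersetCard_nonempty.mpr (by simpa using hk)
  obtain ⟨s, hs, hmin⟩ := exists_min_image _ (fun s => ∑ i ∈ s, μ i) hne
  refine ⟨s, (mem_powersetCard.mp hs).2, fun i hi j hj => ?_⟩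
  have hj' : j ∉ s.erase i := fun h => hj (mem_of_mem_erase h)
  have hswap := hmin (insert j (s.erase i)) <| mem_powersetCard.mpr
    ⟨subset_univ _, by
      rw [card_insert_of_notMem hj', card_erase_add_one hi, (mem_powersetCard.mp hs).2]⟩
  rw [sum_insert hj', sum_erase_eq_sub hi] at hswap
  linarith

theorem exists_forall_le_and_forall_ge_of_mem_of_notMem {s : Finset ι}
    (h : ∀ i ∈ s, ∀ j ∉ s, μ i ≤ μ j) :
    ∃ m, (∀ i ∈ s, μ i ≤ m) ∧ ∀ j ∉ s, m ≤ μ j := by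
  rcases s.eq_empty_or_nonempty with rfl | hs
  · obtain ⟨m, hm⟩ := Finite.exists_ge μ
    exact ⟨m, by simp, fun j _ => hm j⟩
  · obtain ⟨i, hi, hmax⟩ := s.exists_max_image μ hs
    exact ⟨μ i, hmax, h i hi⟩

theorem sum_le_sum_mul_of_forall_le_of_forall_ge (s : Finset ι) {m : ℝ}
    (hs : ∀ i ∈ s, μ i ≤ m) (hsc : ∀ j ∉ s, m ≤ μ j) {t : ι → ℝ}
    (ht₀ : ∀ i, 0 ≤ t i) (ht₁ : ∀ i, t i ≤ 1) (ht : ∑ i, t i = #s) :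
    ∑ i ∈ s, μ i ≤ ∑ i, μ i * t i := by
  classical
  have hterm : ∀ i, 0 ≤ (μ i - m) * (t i - if i ∈ s then 1 else 0) := by
    intro i
    by_cases hi : i ∈ s
    · rw [if_pos hi]
      exact mul_nonneg_of_nonpos_of_nonpos (by linarith [hs i hi]) (by linarith [ht₁ i])
    · rw [if_neg hi, sub_zero]
      exact mul_nonneg (by linarith [hsc i hi]) (ht₀ i)
  have hsum : ∑ i, (μ i - m) * (t i - if i ∈ s then 1 else 0) =
      ∑ i, μ i * t i - ∑ i ∈ s, μ i := by
    simp only [mul_sub, sub_mul, sum_sub_distrib, ← mul_sum, ht, mul_ite, mul_one, mul_zero,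
      sum_ite_mem, univ_inter, sum_const, nsmul_eq_mul]
    ring
  linarith [sum_nonneg fun i (_ : i ∈ univ) => hterm i]

theorem exists_card_eq_sum_le_sum_mul {t : ι → ℝ} (ht₀ : ∀ i, 0 ≤ t i) (ht₁ : ∀ i, t i ≤ 1)
    {k : ℕ} (ht : ∑ i, t i = k) :
    ∃ s : Finset ι, #s = k ∧ ∑ i ∈ s, μ i ≤ ∑ i, μ i * t i := by
  have hk : (k : ℝ) ≤ Fintype.card ι := by
    simpa [← ht] using sum_le_sum fun i (_ : i ∈ univ) => ht₁ i
  obtain ⟨s, hs, hsep⟩ :=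
    exists_card_eq_forall_le_of_mem_of_notMem μ (k := k) (by exact_mod_cast hk)
  obtain ⟨m, hm, hm'⟩ := exists_forall_le_and_forall_ge_of_mem_of_notMem μ hsep
  exact ⟨s, hs, sum_le_sum_mul_of_forall_le_of_forall_ge μ s hm hm' ht₀ ht₁ (by rw [ht, hs])⟩

end WeightedSums

section InnerProduct

variable {E : Type*} [NormedAddCommGroup E] [InnerProductSpace ℝ E]

theorem OrthonormalBasis.sum_sum_sq_inner {ι κ : Type*} [Fintype ι] [Fintype κ]
    (b : OrthonormalBasis ι ℝ E) {e : κ → E} (he : Orthonormal ℝ e) :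
    ∑ i, ∑ j, ⟪b i, e j⟫ ^ 2 = Fintype.card κ := by
  rw [sum_comm]
  simp [b.sum_sq_inner_right, he.1]

theorem Orthonormal.sum_sq_inner_le_one {κ : Type*} [Fintype κ] {e : κ → E}
    (he : Orthonormal ℝ e) {x : E} (hx : ‖x‖ = 1) : ∑ j, ⟪x, e j⟫ ^ 2 ≤ 1 := by
  simpa [hx, real_inner_comm, sq_abs] using he.sum_inner_products_le x (s := univ)

variable [FiniteDimensional ℝ E] {n : ℕ} (hn : Module.finrank ℝ E = n)
  {T : E →ₗ[ℝ] E} (hT : T.IsSymmetric)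

theorem LinearMap.IsSymmetric.inner_apply_self_eq_sum (x : E) :
    ⟪T x, x⟫ = ∑ i, hT.eigenvalues hn i * ⟪hT.eigenvectorBasis hn i, x⟫ ^ 2 := by
  rw [← (hT.eigenvectorBasis hn).sum_inner_mul_inner (T x) x]
  refine sum_congr rfl fun i _ => ?_
  rw [hT x, hT.apply_eigenvectorBasis, real_inner_smul_right, real_inner_comm x,
    RCLike.ofReal_real_eq_id, id_eq]
  ring

theorem LinearMap.IsSymmetric.exists_sum_eigenvalues_le_sum_inner {κ : Type*} [Fintype κ]
    {e : κ → E} (he : Orthonormal ℝ e) :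
    ∃ s : Finset (Fin n), #s = Fintype.card κ ∧
      ∑ i ∈ s, hT.eigenvalues hn i ≤ ∑ j, ⟪T (e j), e j⟫ := by
  set b := hT.eigenvectorBasis hn
  have htrace : ∑ j, ⟪T (e j), e j⟫ =
      ∑ i, hT.eigenvalues hn i * ∑ j, ⟪b i, e j⟫ ^ 2 := by
    simp only [hT.inner_apply_self_eq_sum hn, mul_sum]
    exact sum_comm
  rw [htrace]
  exact exists_card_eq_sum_le_sum_mul _ (fun i => sum_nonneg fun j _ => sq_nonneg _)
    (fun i => he.sum_sq_inner_le_one (b.orthonormal.1 i)) (b.sum_sum_sq_inner he)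

end InnerProduct

def isotropicCurvature {E : Type*} (R : E → E → E → E → ℝ) (e : Fin 4 → E) : ℝ :=
  R (e 0) (e 2) (e 0) (e 2) + R (e 0) (e 3) (e 0) (e 3) + R (e 1) (e 2) (e 1) (e 2) +
    R (e 1) (e 3) (e 1) (e 3) - 2 * R (e 0) (e 1) (e 2) (e 3)

theorem isotropicCurvature_wedgeId {E : Type*} [NormedAddCommGroup E] [InnerProductSpace ℝ E]
    (B : E → E → ℝ) {e : Fin 4 → E} (he : Orthonormal ℝ e) :
    isotropicCurvature (wedgeId B) e = ∑ i, B (e i) (e i) := by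
  have hee : ∀ i j, ⟪e i, e j⟫ = if i = j then 1 else 0 := orthonormal_iff_ite.mp he
  simp only [isotropicCurvature, wedgeId, hee, Fin.sum_univ_four, Fin.isValue, Fin.reduceEq,
    ↓reduceIte]
  ring

theorem stmt7_general {E : Type*} [NormedAddCommGroup E] [InnerProductSpace ℝ E]
    [FiniteDimensional ℝ E] {n : ℕ} (hn : Module.finrank ℝ E = n)
    (A : E →ₗ[ℝ] E) (hAsym : A.IsSymmetric)
    (h4nn : ∀ s : Finset (Fin n), s.card = 4 → 0 ≤ ∑ i ∈ s, hAsym.eigenvalues hn i) :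
    ∀ e : Fin 4 → E, Orthonormal ℝ e →
      wedgeId (fun x y => ⟪A x, y⟫) (e 0) (e 2) (e 0) (e 2) +
        wedgeId (fun x y => ⟪A x, y⟫) (e 0) (e 3) (e 0) (e 3) +
        wedgeId (fun x y => ⟪A x, y⟫) (e 1) (e 2) (e 1) (e 2) +
        wedgeId (fun x y => ⟪A x, y⟫) (e 1) (e 3) (e 1) (e 3) -
        2 * wedgeId (fun x y => ⟪A x, y⟫) (e 0) (e 1) (e 2) (e 3) ≥ 0 := by
  intro e he
  change 0 ≤ isotropicCurvature (wedgeId fun x y => ⟪A x, y⟫) e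
  rw [isotropicCurvature_wedgeId _ he]
  obtain ⟨s, hs, hle⟩ := hAsym.exists_sum_eigenvalues_le_sum_inner hn he
  exact (h4nn s (by simpa using hs)).trans hle

/-- If `A` is a 4-nonnegative self-adjoint endomorphism of a real inner
product space of dimension `n ≥ 4` (the sum of any four eigenvalues, counted with
multiplicity, is nonnegative), then `A∧id` has nonnegative isotropic curvature. -/
theorem stmt7 {E : Type*} [NormedAddCommGroup E] [InnerProductSpace ℝ E]
    [FiniteDimensional ℝ E] {n : ℕ} (hn : Module.finrank ℝ E = n) (hdim : 4 ≤ n)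
    (A : E →ₗ[ℝ] E) (hAsym : A.IsSymmetric)
    (h4nn : ∀ s : Finset (Fin n), s.card = 4 → 0 ≤ ∑ i ∈ s, hAsym.eigenvalues hn i) :
    ∀ e : Fin 4 → E, Orthonormal ℝ e →
      wedgeId (fun x y => ⟪A x, y⟫) (e 0) (e 2) (e 0) (e 2) +
        wedgeId (fun x y => ⟪A x, y⟫) (e 0) (e 3) (e 0) (e 3) +
        wedgeId (fun x y => ⟪A x, y⟫) (e 1) (e 2) (e 1) (e 2) +
        wedgeId (fun x y => ⟪A x, y⟫) (e 1) (e 3) (e 1) (e 3) -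
        2 * wedgeId (fun x y => ⟪A x, y⟫) (e 0) (e 1) (e 2) (e 3) ≥ 0 :=
  stmt7_general hn A hAsym h4nn
end
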